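/- arXiv:0903.2836 — 5 statements merged into one kernel-verified Lean document; each statement's English description precedes it below -/
import Mathlib

section
/- Let n ≥ 3 and let m be an integer with 2 ≤ m ≤ n − 1. Let K₁ and K₂ be nonempty compact convex sets in ℝⁿ. Then K₁ and K₂ are homothetic if and only if for every m-dimensional plane L of ℝⁿ the orthogonal projections π_L(K₁) and π_L(K₂) are homothetic (where the homothety ratio may depend on the projection plane L). -/
/-- Nonempty sets `X₁` and `X₂` in `ℝⁿ` are *homothetic* provided
`X₁ = z + λ • X₂` for some point `z` and some scalar `λ ≠ 0`. -/
def Homothetic {n : ℕ} (X₁ X₂ : Set (EuclideanSpace ℝ (Fin n))) : Prop :=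
  ∃ (z : EuclideanSpace ℝ (Fin n)) (l : ℝ), l ≠ 0 ∧ X₁ = (fun x => z + l • x) '' X₂

/-- The orthogonal projection of `ℝⁿ` onto the plane `p + L`. -/
noncomputable def planeProj {n : ℕ} (p : EuclideanSpace ℝ (Fin n))
    (L : Submodule ℝ (EuclideanSpace ℝ (Fin n))) (x : EuclideanSpace ℝ (Fin n)) :
    EuclideanSpace ℝ (Fin n) :=
  p + (L.orthogonalProjectionOnto (x - p) : EuclideanSpace ℝ (Fin n))

/-!
Write `h₁, h₂` for the support functions of `K₁, K₂`. `K₁ = z + λ K₂` means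
`h₁ u = ⟪u, z⟫ + h₂ (λ u)`, and the support function of a projection onto `L` agrees with `h`
on `L`. So the hypothesis gives, on every plane `P` through `0`, such an identity with a ratio
`λ_P`. Comparing widths `h u + h (-u)` shows that `|λ_P| = μ` does not depend on `P` (or the
widths vanish there), so on every plane one of `f = h₁ - μ h₂`, `g = h₁ - μ h₂ ∘ neg` is linear.
Both are continuous and homogeneous, and for such a pair one of them must be linear everywhere,
which is the homothety with ratio `μ` or `-μ`.

For that last step it suffices to work in `ℝ³` with `g` not additive on the plane `x₃ = 0`.
By continuity `g` is not additive on the nearby planes, so `f` is linear on them and hence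
agrees with a linear form on an open cone around that plane. If `f` minus this form were
nonzero at some `x`, then `g` would have to be additive on every plane through `x`; that keeps
`g` non-additive on planes through `e₁ + c x`, so `f` minus the form vanishes at all `e₁ + c x`,
hence by homogeneity at the points `x + t e₁` (`t ≠ 0`), contradicting continuity at `x`.
-/

open Filter Topology Submodule RealInnerProductSpace Pointwise

section Additivity

variable {V : Type*} [AddCommGroup V] [Module ℝ V]

def IsAdditiveOn (f : V → ℝ) (S : Submodule ℝ V) : Prop :=
  ∀ x ∈ S, ∀ y ∈ S, f (x + y) = f x + f y

theorem IsAdditiveOn.map_add_smul {f : V → ℝ} (hf : ∀ (t : ℝ) x, f (t • x) = t * f x)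
    {x v : V} (h : IsAdditiveOn f (span ℝ {x, v})) (t : ℝ) :
    f (v + t • x) = f v + t * f x := by
  rw [h v (subset_span (by simp)) _ (smul_mem _ t (subset_span (by simp))), hf]

theorem IsAdditiveOn.left_of_map_add_ne {f g : V → ℝ}
    (H : ∀ u v, IsAdditiveOn f (span ℝ {u, v}) ∨ IsAdditiveOn g (span ℝ {u, v}))
    {a b : V} (hab : g (a + b) ≠ g a + g b) : IsAdditiveOn f (span ℝ {a, b}) :=
  (H a b).resolve_right fun h => hab (h a (subset_span (by simp)) b (subset_span (by simp)))

theorem IsAdditiveOn.sub {f g : V → ℝ} {S : Submodule ℝ V} (hf : IsAdditiveOn f S)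
    (hg : IsAdditiveOn g S) : IsAdditiveOn (fun x => f x - g x) S := fun x hx y hy => by
  simp only [hf x hx y hy, hg x hx y hy]
  ring

theorem IsAdditiveOn.comp_linearMap {W : Type*} [AddCommGroup W] [Module ℝ W] {f : V → ℝ}
    {S : Submodule ℝ W} (e : W →ₗ[ℝ] V) (h : IsAdditiveOn f (S.map e)) :
    IsAdditiveOn (f ∘ e) S := fun x hx y hy => by
  simpa using h _ (mem_map_of_mem hx) _ (mem_map_of_mem hy)

end Additivity

section Vanishing

variable {V : Type*} [AddCommGroup V] [Module ℝ V] [TopologicalSpace V] [ContinuousAdd V]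
  [ContinuousSMul ℝ V]

theorem tendsto_add_smul_nhdsNE (w y : V) :
    Tendsto (fun t : ℝ => w + t • y) (𝓝[≠] 0) (𝓝 w) := by
  have : Tendsto (fun t : ℝ => w + t • y) (𝓝 0) (𝓝 (w + (0 : ℝ) • y)) :=
    Continuous.tendsto (by fun_prop) 0
  simpa using this.mono_left nhdsWithin_le_nhds

theorem eq_zero_of_map_add_smul {f : V → ℝ} {U : Set V} (hU : IsOpen U)
    (hfU : ∀ y ∈ U, f y = 0) {w y : V} (hw : w ∈ U)
    (hadd : ∀ t : ℝ, f (w + t • y) = f w + t * f y) : f y = 0 := by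
  obtain ⟨t, htU, ht⟩ : ∃ t : ℝ, w + t • y ∈ U ∧ t ≠ 0 :=
    (((tendsto_add_smul_nhdsNE w y).eventually (hU.mem_nhds hw)).and self_mem_nhdsWithin).exists
  have := hadd t
  rw [hfU _ htU, hfU w hw, zero_add, zero_eq_mul] at this
  exact this.resolve_left ht

variable {f g : V → ℝ} (hf : ∀ (t : ℝ) x, f (t • x) = t * f x)
  (hg : ∀ (t : ℝ) x, g (t • x) = t * g x)
  (H : ∀ u v, IsAdditiveOn f (span ℝ {u, v}) ∨ IsAdditiveOn g (span ℝ {u, v}))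
  (φ : V →ₗ[ℝ] ℝ) {U : Set V} (hU : IsOpen U) (hfU : ∀ y ∈ U, f y = 0)
  (hkerU : ∀ y, φ y = 0 → y ≠ 0 → y ∈ U)

include hf hg H hU hfU hkerU in
theorem map_add_smul_of_map_ne_zero {x : V} (hx : f x ≠ 0) (v : V) (t : ℝ) :
    g (v + t • x) = g v + t * g x := by
  have hφx : φ x ≠ 0 := fun h =>
    hx (hfU x (hkerU x h fun h0 => hx (by simpa [h0] using hf 0 0)))
  -- `y` spans the line in which `span {x, v}` meets `ker φ`
  set y := φ v • x - φ x • v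
  by_cases hy : y = 0
  · have hv : v = (φ v / φ x) • x := by
      rw [div_eq_inv_mul, mul_smul, sub_eq_zero.mp hy, smul_smul, inv_mul_cancel₀ hφx, one_smul]
    rw [hv, ← add_smul, hg, hg, add_mul]
  rcases H x v with hfxv | hgxv
  · refine absurd (eq_zero_of_map_add_smul hU hfU (hkerU y ?_ hy) fun s => ?_) hx
    · simp [y, mul_comm]
    · rw [hfxv y (sub_mem (smul_mem _ _ (subset_span (by simp)))
        (smul_mem _ _ (subset_span (by simp)))) _ (smul_mem _ s (subset_span (by simp))), hf]
  · exact hgxv.map_add_smul hg t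

include hf hg H hU hfU hkerU in
theorem eq_zero_of_eq_zero_near_ker (hfc : Continuous f) {e₁ e₂ : V} (he₂ : φ e₂ = 0)
    (hg₁₂ : g (e₁ + e₂) ≠ g e₁ + g e₂) (x : V) : f x = 0 := by
  by_contra hx
  have hshift := map_add_smul_of_map_ne_zero hf hg H φ hU hfU hkerU hx
  have he₂U : e₂ ∈ U := hkerU e₂ he₂ fun h => hg₁₂ (by simpa [h] using hg 0 0)
  have hline : ∀ c : ℝ, f (e₁ + c • x) = 0 := fun c => by
    have hne : g ((e₁ + c • x) + e₂) ≠ g (e₁ + c • x) + g e₂ := by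
      rw [add_right_comm, hshift, hshift]
      exact fun h => hg₁₂ (by linarith)
    exact eq_zero_of_map_add_smul hU hfU he₂U
      ((IsAdditiveOn.left_of_map_add_ne H hne).map_add_smul hf)
  have hzero : (fun t : ℝ => f (x + t • e₁)) =ᶠ[𝓝[≠] 0] fun _ => 0 := by
    filter_upwards [self_mem_nhdsWithin] with t (ht : t ≠ 0)
    rw [show x + t • e₁ = t • (e₁ + t⁻¹ • x) by
      rw [smul_add, smul_smul, mul_inv_cancel₀ ht, one_smul, add_comm], hf, hline, mul_zero]
  exact hx (tendsto_nhds_unique ((hfc.tendsto x).comp (tendsto_add_smul_nhdsNE x e₁))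
    (tendsto_const_nhds.congr' hzero.symm))

end Vanishing

section ThreeSpace

def horizontalCone (ε : ℝ) : Set (ℝ × ℝ × ℝ) :=
  {v | |v.2.2| < ε * |v.1| ∨ |v.2.2| < ε * |v.2.1|}

theorem isOpen_horizontalCone (ε : ℝ) : IsOpen (horizontalCone ε) := by
  rw [horizontalCone, Set.ofPred_or]
  exact (isOpen_lt (by fun_prop) (by fun_prop)).union (isOpen_lt (by fun_prop) (by fun_prop))

theorem mem_horizontalCone {ε : ℝ} (hε : 0 < ε) {v : ℝ × ℝ × ℝ} (hv₃ : v.2.2 = 0)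
    (hv : v ≠ 0) : v ∈ horizontalCone ε := by
  obtain ⟨x, y, z⟩ := v
  simp only at hv₃
  subst hv₃
  by_cases hx : x = 0
  · subst hx
    have hy : y ≠ 0 := fun hy => hv (by simp [hy])
    right
    simpa using mul_pos hε (abs_pos.mpr hy)
  · left
    simpa using mul_pos hε (abs_pos.mpr hx)

variable {f g : ℝ × ℝ × ℝ → ℝ}

theorem exists_isAdditiveOn_tilted_planes (hgc : Continuous g)
    (H : ∀ u v, IsAdditiveOn f (span ℝ {u, v}) ∨ IsAdditiveOn g (span ℝ {u, v}))
    (hg₁₂ : g ((1, 0, 0) + (0, 1, 0)) ≠ g (1, 0, 0) + g (0, 1, 0)) :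
    ∃ ε > 0, ∀ p q : ℝ, |p| < ε → |q| < ε →
      IsAdditiveOn f (span ℝ {(1, 0, p), (0, 1, q)}) := by
  have hcont : Continuous fun pq : ℝ × ℝ =>
      g ((1, 0, pq.1) + (0, 1, pq.2)) - (g (1, 0, pq.1) + g (0, 1, pq.2)) := by fun_prop
  obtain ⟨ε, hε, hball⟩ := Metric.eventually_nhds_iff.mp
    (hcont.continuousAt (x := (0, 0)).eventually_ne (sub_ne_zero.mpr hg₁₂))
  refine ⟨ε, hε, fun p q hp hq =>
    IsAdditiveOn.left_of_map_add_ne H (sub_ne_zero.mp (hball (y := (p, q)) ?_))⟩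
  simpa [Prod.dist_eq, Real.dist_eq] using And.intro hp hq

theorem exists_eqOn_horizontalCone (hf : ∀ (t : ℝ) x, f (t • x) = t * f x) {ε : ℝ}
    (hε : 0 < ε)
    (htilt : ∀ p q : ℝ, |p| < ε → |q| < ε → IsAdditiveOn f (span ℝ {(1, 0, p), (0, 1, q)})) :
    ∃ a b k : ℝ, ∀ v ∈ horizontalCone ε, f v = a * v.1 + b * v.2.1 + k * v.2.2 := by
  have hplane : ∀ α β p q : ℝ, |p| < ε → |q| < ε →
      f (α, β, α * p + β * q) = α * f (1, 0, p) + β * f (0, 1, q) := by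
    intro α β p q hp hq
    have h := htilt p q hp hq (α • (1, 0, p)) (smul_mem _ α (subset_span (by simp)))
      (β • (0, 1, q)) (smul_mem _ β (subset_span (by simp)))
    rw [hf, hf] at h
    simpa using h
  have h0 : |(0 : ℝ)| < ε := by simpa using hε
  -- two decompositions of `(t, s, t * s)` along tilted planes
  have hcross : ∀ s t : ℝ, |s| < ε → |t| < ε →
      t * (f (1, 0, s) - f (1, 0, 0)) = s * (f (0, 1, t) - f (0, 1, 0)) := by
    intro s t hs ht
    have h1 := hplane t s s 0 hs h0
    rw [show t * s + s * 0 = t * 0 + s * t by ring, hplane t s 0 t h0 ht] at h1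
    linarith
  have hs₀ : |ε / 2| < ε := by rw [abs_of_pos (by positivity)]; linarith
  obtain ⟨k, hk₂⟩ : ∃ k, ∀ t, |t| < ε → f (0, 1, t) = f (0, 1, 0) + k * t :=
    ⟨(f (1, 0, ε / 2) - f (1, 0, 0)) / (ε / 2), fun t ht => by
      have := hcross _ t hs₀ ht
      field_simp
      linear_combination (-2) * this⟩
  have hk₁ : ∀ s, |s| < ε → f (1, 0, s) = f (1, 0, 0) + k * s := fun s hs => by
    have := hcross s _ hs hs₀
    rw [hk₂ _ hs₀] at this
    refine mul_left_cancel₀ (by positivity : ε / 2 ≠ 0) ?_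
    linear_combination this
  refine ⟨f (1, 0, 0), f (0, 1, 0), k, ?_⟩
  rintro ⟨x, y, z⟩ (h | h) <;> dsimp only at h ⊢
  · have hx : x ≠ 0 := by rintro rfl; simp at h; linarith [abs_nonneg z]
    have hp : |z / x| < ε := by rw [abs_div, div_lt_iff₀ (abs_pos.mpr hx)]; linarith
    have := hplane x y (z / x) 0 hp h0
    rw [show x * (z / x) + y * 0 = z by field_simp; ring, hk₁ _ hp] at this
    rw [this]; field_simp; ring
  · have hy : y ≠ 0 := by rintro rfl; simp at h; linarith [abs_nonneg z]
    have hq : |z / y| < ε := by rw [abs_div, div_lt_iff₀ (abs_pos.mpr hy)]; linarith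
    have := hplane x y 0 (z / y) h0 hq
    rw [show x * 0 + y * (z / y) = z by field_simp; ring, hk₂ _ hq] at this
    rw [this]; field_simp; ring

theorem map_add_of_map_add_ne_coord (hfc : Continuous f) (hgc : Continuous g)
    (hf : ∀ (t : ℝ) x, f (t • x) = t * f x) (hg : ∀ (t : ℝ) x, g (t • x) = t * g x)
    (H : ∀ u v, IsAdditiveOn f (span ℝ {u, v}) ∨ IsAdditiveOn g (span ℝ {u, v}))
    (hg₁₂ : g ((1, 0, 0) + (0, 1, 0)) ≠ g (1, 0, 0) + g (0, 1, 0)) (x y : ℝ × ℝ × ℝ) :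
    f (x + y) = f x + f y := by
  obtain ⟨ε, hε, htilt⟩ := exists_isAdditiveOn_tilted_planes hgc H hg₁₂
  obtain ⟨a, b, k, hcone⟩ := exists_eqOn_horizontalCone hf hε htilt
  set ℓ : ℝ × ℝ × ℝ → ℝ := fun v => a * v.1 + b * v.2.1 + k * v.2.2
  have hℓ : ∀ S : Submodule ℝ (ℝ × ℝ × ℝ), IsAdditiveOn ℓ S := fun S u _ v _ => by
    simp only [ℓ, Prod.fst_add, Prod.snd_add]
    ring
  have hzero := eq_zero_of_eq_zero_near_ker (f := fun v => f v - ℓ v)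
    (fun t v => by simp only [ℓ, hf, Prod.smul_fst, Prod.smul_snd, smul_eq_mul]; ring) hg
    (fun u v => (H u v).imp_left fun h => h.sub (hℓ _))
    ((LinearMap.snd ℝ ℝ ℝ).comp (LinearMap.snd ℝ ℝ (ℝ × ℝ))) (isOpen_horizontalCone ε)
    (fun v hv => sub_eq_zero.mpr (hcone v hv)) (fun v hv₃ hv => mem_horizontalCone hε hv₃ hv)
    (by fun_prop) (e₁ := (1, 0, 0)) (e₂ := (0, 1, 0)) rfl hg₁₂
  linarith [hzero (x + y), hzero x, hzero y, hℓ ⊤ x trivial y trivial]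

end ThreeSpace

section Dichotomy

variable {V : Type*} [AddCommGroup V] [Module ℝ V] [TopologicalSpace V] [ContinuousAdd V]
  [ContinuousSMul ℝ V] {f g : V → ℝ}

theorem map_add_of_mem_span_of_map_add_ne (hfc : Continuous f) (hgc : Continuous g)
    (hf : ∀ (t : ℝ) x, f (t • x) = t * f x) (hg : ∀ (t : ℝ) x, g (t • x) = t * g x)
    (H : ∀ u v, IsAdditiveOn f (span ℝ {u, v}) ∨ IsAdditiveOn g (span ℝ {u, v}))
    {c d : V} (hcd : g (c + d) ≠ g c + g d) :
    ∀ x ∈ span ℝ {c, d}, ∀ u, f (x + u) = f x + f u := by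
  intro x hx u
  let e : ℝ × ℝ × ℝ →ₗ[ℝ] V :=
    { toFun := fun v => v.1 • c + v.2.1 • d + v.2.2 • u
      map_add' := fun v w => by simp only [Prod.fst_add, Prod.snd_add, add_smul]; abel
      map_smul' := fun t v => by simp [mul_smul, smul_add] }
  have he : Continuous e := by change Continuous fun v : ℝ × ℝ × ℝ => _; fun_prop
  have key := map_add_of_map_add_ne_coord (f := f ∘ e) (g := g ∘ e) (hfc.comp he) (hgc.comp he)
    (fun t v => by simp [hf]) (fun t v => by simp [hg])
    (fun p q => by
      have hpq := H (e p) (e q)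
      rw [← Set.image_pair, ← map_span] at hpq
      exact hpq.imp (IsAdditiveOn.comp_linearMap e) (IsAdditiveOn.comp_linearMap e))
    (by simpa [e] using hcd)
  obtain ⟨s, t, rfl⟩ := mem_span_pair.mp hx
  simpa [e] using key (s, t, 0) (0, 0, 1)

theorem map_add_or_map_add (hfc : Continuous f) (hgc : Continuous g)
    (hf : ∀ (t : ℝ) x, f (t • x) = t * f x) (hg : ∀ (t : ℝ) x, g (t • x) = t * g x)
    (H : ∀ u v, IsAdditiveOn f (span ℝ {u, v}) ∨ IsAdditiveOn g (span ℝ {u, v})) :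
    (∀ x y, f (x + y) = f x + f y) ∨ (∀ x y, g (x + y) = g x + g y) := by
  by_contra! hcon
  obtain ⟨⟨a, b, hab⟩, ⟨c, d, hcd⟩⟩ := hcon
  have hmem : ∀ x y : V, x ∈ span ℝ {x, y} ∧ y ∈ span ℝ {x, y} :=
    fun x y => ⟨subset_span (by simp), subset_span (by simp)⟩
  have hf_along := map_add_of_mem_span_of_map_add_ne hfc hgc hf hg H hcd
  have hg_along := map_add_of_mem_span_of_map_add_ne hgc hfc hg hf (fun u v => (H u v).symm) hab
  -- `f` is additive along `span {c, d}` and `g` along `span {a, b}`, so the plane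
  -- `span {c + a, d + b}` inherits the defect of `f` at `(a, b)` and of `g` at `(c, d)`
  have hf_new : f ((c + a) + (d + b)) ≠ f (c + a) + f (d + b) := by
    rw [add_add_add_comm, hf_along _ (add_mem (hmem c d).1 (hmem c d).2),
      hf_along _ (hmem c d).1, hf_along _ (hmem c d).1, hf_along _ (hmem c d).2]
    exact fun h => hab (by linarith)
  have hg_new : g ((c + a) + (d + b)) ≠ g (c + a) + g (d + b) := by
    rw [show c + a + (d + b) = a + b + (c + d) by abel, add_comm c a, add_comm d b,
      hg_along _ (add_mem (hmem a b).1 (hmem a b).2), hg_along _ (hmem a b).1,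
      hg_along _ (hmem a b).1, hg_along _ (hmem a b).2]
    exact fun h => hcd (by linarith)
  rcases H (c + a) (d + b) with h | h
  · exact hf_new (h _ (hmem _ _).1 _ (hmem _ _).2)
  · exact hg_new (h _ (hmem _ _).1 _ (hmem _ _).2)

end Dichotomy

section SupportFunction

variable {E : Type*} [NormedAddCommGroup E] [InnerProductSpace ℝ E]

/-- Meaningful for nonempty compact `K`; otherwise `sSup` may return its junk value `0`. -/
noncomputable def supportFun (K : Set E) (u : E) : ℝ :=
  sSup ((fun x => ⟪u, x⟫) '' K)

noncomputable def width (K : Set E) (u : E) : ℝ :=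
  supportFun K u + supportFun K (-u)

variable {K : Set E}

theorem bddAbove_inner_image (hc : IsCompact K) (u : E) :
    BddAbove ((fun x => ⟪u, x⟫) '' K) :=
  (hc.image (by fun_prop)).bddAbove

theorem inner_le_supportFun (hc : IsCompact K) {x : E} (hx : x ∈ K) (u : E) :
    ⟪u, x⟫ ≤ supportFun K u :=
  le_csSup (bddAbove_inner_image hc u) ⟨x, hx, rfl⟩

theorem exists_inner_eq_supportFun (hne : K.Nonempty) (hc : IsCompact K) (u : E) :
    ∃ x ∈ K, ⟪u, x⟫ = supportFun K u :=
  (hc.image (f := fun x => ⟪u, x⟫) (by fun_prop)).sSup_mem (hne.image _)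

theorem supportFun_add_le (hne : K.Nonempty) (hc : IsCompact K) (u v : E) :
    supportFun K (u + v) ≤ supportFun K u + supportFun K v := by
  obtain ⟨x, hx, hxmax⟩ := exists_inner_eq_supportFun hne hc (u + v)
  rw [← hxmax, inner_add_left]
  exact add_le_add (inner_le_supportFun hc hx u) (inner_le_supportFun hc hx v)

theorem supportFun_smul {t : ℝ} (ht : 0 ≤ t) (u : E) :
    supportFun K (t • u) = t * supportFun K u := by
  rw [supportFun, supportFun, ← smul_eq_mul, ← Real.sSup_smul_of_nonneg ht, ← Set.image_smul,
    Set.image_image]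
  simp_rw [real_inner_smul_left, smul_eq_mul]

theorem supportFun_neg (u : E) : supportFun (-K) u = supportFun K (-u) := by
  rw [supportFun, supportFun, ← Set.image_neg_eq_neg, Set.image_image]
  simp_rw [inner_neg_right, inner_neg_left]

theorem supportFun_smul_of_nonpos {t : ℝ} (ht : t ≤ 0) (u : E) :
    supportFun K (t • u) = -t * supportFun (-K) u := by
  rw [supportFun_neg, ← supportFun_smul (neg_nonneg.mpr ht), smul_neg, neg_smul, neg_neg]

theorem continuous_supportFun (hne : K.Nonempty) (hc : IsCompact K) :
    Continuous (supportFun K) := by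
  obtain ⟨R, hR⟩ := hc.isBounded.exists_norm_le
  refine (LipschitzWith.of_le_add_mul' R fun u v => ?_).continuous
  obtain ⟨x, hx, hxmax⟩ := exists_inner_eq_supportFun hne hc u
  have hnear : ⟪u - v, x⟫ ≤ R * dist u v := by
    rw [dist_eq_norm, mul_comm]
    exact (real_inner_le_norm _ _).trans (mul_le_mul_of_nonneg_left (hR x hx) (norm_nonneg _))
  rw [← hxmax]
  linarith [inner_le_supportFun hc hx v, inner_sub_left (𝕜 := ℝ) u v x]

theorem supportFun_affine_image (hne : K.Nonempty) (hc : IsCompact K) (z : E) (l : ℝ)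
    (u : E) : supportFun ((fun x => z + l • x) '' K) u = ⟪u, z⟫ + supportFun K (l • u) := by
  have himage : (fun x => ⟪u, x⟫) '' ((fun x => z + l • x) '' K)
      = (fun r => ⟪u, z⟫ + r) '' ((fun x => ⟪l • u, x⟫) '' K) := by
    simp_rw [Set.image_image, inner_add_right, real_inner_smul_left, real_inner_smul_right]
  rw [supportFun, himage, supportFun, ← Monotone.map_csSup_of_continuousAt
    (f := fun r => ⟪u, z⟫ + r) (by fun_prop) (fun _ _ h => add_le_add_right h _) (hne.image _)
    (bddAbove_inner_image hc _)]

theorem supportFun_image_starProjection (L : Submodule ℝ E) [L.HasOrthogonalProjection]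
    (u : E) : supportFun (L.starProjection '' K) u = supportFun K (L.starProjection u) := by
  rw [supportFun, supportFun, Set.image_image]
  simp_rw [inner_starProjection_left_eq_right]

theorem subset_of_supportFun_le [CompleteSpace E] {A B : Set E} (hA : IsCompact A)
    (hneB : B.Nonempty) (hcB : IsCompact B) (hcvB : Convex ℝ B)
    (h : ∀ u, supportFun A u ≤ supportFun B u) : A ⊆ B := by
  intro x hxA
  by_contra hxB
  obtain ⟨φ, s, hφB, hφx⟩ := geometric_hahn_banach_closed_point hcvB hcB.isClosed hxB
  set w := (InnerProductSpace.toDual ℝ E).symm φ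
  obtain ⟨y, hy, hymax⟩ := exists_inner_eq_supportFun hneB hcB w
  have hB : supportFun B w < s := by
    rw [← hymax, InnerProductSpace.toDual_symm_apply]
    exact hφB y hy
  have hA : s < supportFun A w := by
    rw [← InnerProductSpace.toDual_symm_apply (x := x) (y := φ)] at hφx
    exact hφx.trans_le (inner_le_supportFun hA hxA w)
  linarith [h w]

theorem width_smul (t : ℝ) (u : E) : width K (t • u) = |t| * width K u := by
  rcases le_total 0 t with ht | ht
  · rw [width, width, ← smul_neg, supportFun_smul ht, supportFun_smul ht, abs_of_nonneg ht]
    ring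
  · rw [width, width, show t • u = (-t) • -u by simp, ← smul_neg, neg_neg,
      supportFun_smul (neg_nonneg.mpr ht), supportFun_smul (neg_nonneg.mpr ht), abs_of_nonpos ht]
    ring

theorem width_neg (u : E) : width (-K) u = width K u := by
  rw [width, width, supportFun_neg, supportFun_neg, neg_neg, add_comm]

theorem supportFun_add_of_width_eq_zero (hne : K.Nonempty) (hc : IsCompact K) {u v : E}
    (hu : width K u = 0) (hv : width K v = 0) (huv : width K (u + v) = 0) :
    supportFun K (u + v) = supportFun K u + supportFun K v := by
  have := supportFun_add_le hne hc (-u) (-v)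
  rw [← neg_add] at this
  rw [width] at hu hv huv
  linarith [supportFun_add_le hne hc u v]

end SupportFunction

section Reduction

variable {E : Type*} [NormedAddCommGroup E] [InnerProductSpace ℝ E]

theorem exists_pos_forall_eq_mul {α : Type*} {w₁ w₂ : α → ℝ}
    (h : ∀ u v, ∃ c > 0, w₁ u = c * w₂ u ∧ w₁ v = c * w₂ v) :
    ∃ μ > 0, ∀ u, w₁ u = μ * w₂ u := by
  by_cases h0 : ∀ u, w₂ u = 0
  · refine ⟨1, one_pos, fun u => ?_⟩
    obtain ⟨c, -, hc, -⟩ := h u u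
    rw [hc, h0, mul_zero, mul_zero]
  · obtain ⟨u₀, hu₀⟩ := not_forall.mp h0
    obtain ⟨μ, hμ, hμu₀, -⟩ := h u₀ u₀
    refine ⟨μ, hμ, fun u => ?_⟩
    obtain ⟨c, -, hcu₀, hcu⟩ := h u₀ u
    rwa [mul_right_cancel₀ hu₀ (hcu₀.symm.trans hμu₀)] at hcu

variable {K₁ K₂ : Set E} {S : Submodule ℝ E} {z : E} {μ : ℝ}

theorem width_eq_abs_mul_of_supportFun_eq {l : ℝ}
    (hS : ∀ x ∈ S, supportFun K₁ x = ⟪x, z⟫ + supportFun K₂ (l • x)) {x : E} (hx : x ∈ S) :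
    width K₁ x = |l| * width K₂ x := by
  rw [width, hS x hx, hS (-x) (neg_mem hx), inner_neg_left, ← width_smul, width, smul_neg]
  ring

theorem continuous_sub_mul_supportFun (hne₁ : K₁.Nonempty) (hc₁ : IsCompact K₁)
    (hne₂ : K₂.Nonempty) (hc₂ : IsCompact K₂) (μ : ℝ) :
    Continuous fun x => supportFun K₁ x - μ * supportFun K₂ x :=
  (continuous_supportFun hne₁ hc₁).sub (continuous_const.mul (continuous_supportFun hne₂ hc₂))

theorem sub_mul_supportFun_smul (hμ : ∀ x, width K₁ x = μ * width K₂ x) (t : ℝ) (x : E) :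
    supportFun K₁ (t • x) - μ * supportFun K₂ (t • x)
      = t * (supportFun K₁ x - μ * supportFun K₂ x) := by
  rcases le_total 0 t with ht | ht
  · rw [supportFun_smul ht, supportFun_smul ht]
    ring
  · have := hμ x
    rw [width, width] at this
    rw [show t • x = (-t) • -x by simp, supportFun_smul (neg_nonneg.mpr ht),
      supportFun_smul (neg_nonneg.mpr ht)]
    linear_combination (-t) * this

theorem isAdditiveOn_sub_mul_supportFun (hne₂ : K₂.Nonempty) (hc₂ : IsCompact K₂) {l : ℝ}
    (hS : ∀ x ∈ S, supportFun K₁ x = ⟪x, z⟫ + l * supportFun K₂ x) (hl : 0 ≤ l)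
    (hμ : ∀ x, width K₁ x = μ * width K₂ x) :
    IsAdditiveOn (fun x => supportFun K₁ x - μ * supportFun K₂ x) S := by
  have hwidth : ∀ x ∈ S, width K₁ x = l * width K₂ x := fun x hx => by
    rw [width_eq_abs_mul_of_supportFun_eq (fun y hy => by rw [hS y hy, supportFun_smul hl]) hx,
      abs_of_nonneg hl]
  intro x hx y hy
  by_cases hlμ : l = μ
  · simp only [← hlμ, hS _ (add_mem hx hy), hS x hx, hS y hy, inner_add_left]
    ring
  have hflat : ∀ x ∈ S, width K₂ x = 0 := fun x hx =>
    (mul_eq_zero.mp (by linarith [hwidth x hx, hμ x] : (l - μ) * width K₂ x = 0)).resolve_left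
      (sub_ne_zero.mpr hlμ)
  simp only [hS _ (add_mem hx hy), hS x hx, hS y hy, inner_add_left,
    supportFun_add_of_width_eq_zero hne₂ hc₂ (hflat x hx) (hflat y hy) (hflat _ (add_mem hx hy))]
  ring

theorem isAdditiveOn_or_isAdditiveOn_of_supportFun_eq (hne₂ : K₂.Nonempty) (hc₂ : IsCompact K₂)
    {l : ℝ} (hS : ∀ x ∈ S, supportFun K₁ x = ⟪x, z⟫ + supportFun K₂ (l • x))
    (hμ : ∀ x, width K₁ x = μ * width K₂ x) :
    IsAdditiveOn (fun x => supportFun K₁ x - μ * supportFun K₂ x) S ∨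
      IsAdditiveOn (fun x => supportFun K₁ x - μ * supportFun (-K₂) x) S := by
  rcases le_total 0 l with hl | hl
  · exact .inl <| isAdditiveOn_sub_mul_supportFun hne₂ hc₂
      (fun x hx => by rw [hS x hx, supportFun_smul hl]) hl hμ
  · exact .inr <| isAdditiveOn_sub_mul_supportFun hne₂.neg hc₂.neg
      (fun x hx => by rw [hS x hx, supportFun_smul_of_nonpos hl]) (neg_nonneg.mpr hl)
      (by simpa only [width_neg] using hμ)

theorem exists_supportFun_eq_of_map_add [CompleteSpace E] (hne₁ : K₁.Nonempty)
    (hc₁ : IsCompact K₁) (hne₂ : K₂.Nonempty) (hc₂ : IsCompact K₂)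
    (hμ : ∀ x, width K₁ x = μ * width K₂ x)
    (hadd : ∀ x y, supportFun K₁ (x + y) - μ * supportFun K₂ (x + y)
      = supportFun K₁ x - μ * supportFun K₂ x + (supportFun K₁ y - μ * supportFun K₂ y)) :
    ∃ z, ∀ u, supportFun K₁ u = ⟪u, z⟫ + μ * supportFun K₂ u := by
  let φ : StrongDual ℝ E :=
    { toFun := fun x => supportFun K₁ x - μ * supportFun K₂ x
      map_add' := hadd
      map_smul' := fun t u => by simp [sub_mul_supportFun_smul hμ]
      cont := continuous_sub_mul_supportFun hne₁ hc₁ hne₂ hc₂ μ }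
  refine ⟨(InnerProductSpace.toDual ℝ E).symm φ, fun u => ?_⟩
  rw [real_inner_comm, InnerProductSpace.toDual_symm_apply]
  exact (sub_add_cancel _ _).symm

end Reduction

theorem Submodule.exists_le_finrank_eq {K V : Type*} [Field K] [AddCommGroup V] [Module K V]
    [FiniteDimensional K V] (W : Submodule K V) {m : ℕ} (hW : Module.finrank K W ≤ m)
    (hm : m ≤ Module.finrank K V) : ∃ L : Submodule K V, W ≤ L ∧ Module.finrank K L = m := by
  induction m with
  | zero => exact ⟨W, le_rfl, Nat.le_zero.mp hW⟩
  | succ m ih =>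
    rcases hW.eq_or_lt with hW | hW
    · exact ⟨W, le_rfl, hW⟩
    obtain ⟨L, hWL, hL⟩ := ih (Nat.lt_succ_iff.mp hW) (by omega)
    obtain ⟨x, hx⟩ : ∃ x, x ∉ L := by
      by_contra! hall
      rw [(eq_top_iff.mpr fun x _ => hall x : L = ⊤), finrank_top] at hL
      omega
    exact ⟨L ⊔ span K {x}, hWL.trans le_sup_left, by rw [finrank_sup_span_singleton hx, hL]⟩

theorem finrank_span_pair_le {K V : Type*} [DivisionRing K] [AddCommGroup V] [Module K V]
    (u v : V) : Module.finrank K (span K {u, v}) ≤ 2 := by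
  classical
  have := finrank_span_finset_le_card (R := K) ({u, v} : Finset V)
  rw [Finset.coe_pair] at this
  exact this.trans Finset.card_le_two

section Homothety

variable {n : ℕ}

local notation "ℝⁿ" => EuclideanSpace ℝ (Fin n)

theorem Homothetic.exists_supportFun_eq {X₁ X₂ : Set ℝⁿ} (hne₂ : X₂.Nonempty)
    (hc₂ : IsCompact X₂) (h : Homothetic X₁ X₂) :
    ∃ z, ∃ l : ℝ, l ≠ 0 ∧ ∀ u, supportFun X₁ u = ⟪u, z⟫ + supportFun X₂ (l • u) := by
  obtain ⟨z, l, hl, rfl⟩ := h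
  exact ⟨z, l, hl, supportFun_affine_image hne₂ hc₂ z l⟩

theorem homothetic_of_supportFun_eq {K₁ K₂ : Set ℝⁿ} (hne₁ : K₁.Nonempty) (hc₁ : IsCompact K₁)
    (hcv₁ : Convex ℝ K₁) (hne₂ : K₂.Nonempty) (hc₂ : IsCompact K₂) (hcv₂ : Convex ℝ K₂)
    {z : ℝⁿ} {l : ℝ} (hl : l ≠ 0) (h : ∀ u, supportFun K₁ u = ⟪u, z⟫ + supportFun K₂ (l • u)) :
    Homothetic K₁ K₂ := by
  refine ⟨z, l, hl, subset_antisymm ?_ ?_⟩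
  · refine subset_of_supportFun_le hc₁ (hne₂.image _) (hc₂.image (by fun_prop))
      (hcv₂.affinity z l) fun u => ?_
    rw [supportFun_affine_image hne₂ hc₂, h]
  · refine subset_of_supportFun_le (hc₂.image (by fun_prop)) hne₁ hc₁ hcv₁ fun u => ?_
    rw [supportFun_affine_image hne₂ hc₂, h]

theorem Homothetic.image_affineMap {X₁ X₂ : Set ℝⁿ} (h : Homothetic X₁ X₂)
    (A : ℝⁿ →ᵃ[ℝ] ℝⁿ) : Homothetic (A '' X₁) (A '' X₂) := by
  obtain ⟨z, l, hl, rfl⟩ := h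
  refine ⟨A z - l • A 0, l, hl, ?_⟩
  rw [Set.image_image, Set.image_image]
  refine Set.image_congr fun x _ => ?_
  have hlin := A.linearMap_vsub x 0
  rw [show z + l • x = l • x +ᵥ z from add_comm _ _, A.map_vadd, map_smul]
  simp only [vsub_eq_sub, sub_zero, vadd_eq_add] at hlin ⊢
  rw [hlin, smul_sub]
  abel

noncomputable def planeProjAffineMap (p : ℝⁿ) (L : Submodule ℝ ℝⁿ) : ℝⁿ →ᵃ[ℝ] ℝⁿ where
  toFun := planeProj p L
  linear := L.starProjection
  map_vadd' x v := by
    simp only [planeProj, vadd_eq_add, coe_orthogonalProjectionOnto_apply,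
      ContinuousLinearMap.coe_coe]
    rw [add_sub_assoc, map_add]
    abel

theorem planeProj_zero (L : Submodule ℝ ℝⁿ) : planeProj 0 L = L.starProjection := by
  ext1 x
  simp [planeProj]

theorem exists_supportFun_eq_on_of_homothetic_planeProj {K₁ K₂ : Set ℝⁿ}
    (hne₂ : K₂.Nonempty) (hc₂ : IsCompact K₂) {L : Submodule ℝ ℝⁿ}
    (h : Homothetic (planeProj 0 L '' K₁) (planeProj 0 L '' K₂)) :
    ∃ z, ∃ l : ℝ, l ≠ 0 ∧ ∀ x ∈ L, supportFun K₁ x = ⟪x, z⟫ + supportFun K₂ (l • x) := by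
  rw [planeProj_zero] at h
  obtain ⟨z, l, hl, heq⟩ := h.exists_supportFun_eq (hne₂.image _) (hc₂.image (by fun_prop))
  refine ⟨z, l, hl, fun x hx => ?_⟩
  have hx' := heq x
  rwa [supportFun_image_starProjection, supportFun_image_starProjection,
    starProjection_eq_self_iff.mpr hx, starProjection_eq_self_iff.mpr (smul_mem L l hx)] at hx'

theorem homothetic_of_forall_span_pair {K₁ K₂ : Set ℝⁿ} (hne₁ : K₁.Nonempty)
    (hc₁ : IsCompact K₁) (hcv₁ : Convex ℝ K₁) (hne₂ : K₂.Nonempty) (hc₂ : IsCompact K₂)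
    (hcv₂ : Convex ℝ K₂)
    (h : ∀ u v : ℝⁿ, ∃ z, ∃ l : ℝ, l ≠ 0 ∧
      ∀ x ∈ span ℝ {u, v}, supportFun K₁ x = ⟪x, z⟫ + supportFun K₂ (l • x)) :
    Homothetic K₁ K₂ := by
  obtain ⟨μ, hμ, hwidth⟩ := exists_pos_forall_eq_mul (w₁ := width K₁) (w₂ := width K₂)
    fun u v => by
      obtain ⟨z, l, hl, hS⟩ := h u v
      exact ⟨|l|, abs_pos.mpr hl, width_eq_abs_mul_of_supportFun_eq hS (subset_span (by simp)),
        width_eq_abs_mul_of_supportFun_eq hS (subset_span (by simp))⟩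
  have hwidth' : ∀ x, width K₁ x = μ * width (-K₂) x := by simpa only [width_neg] using hwidth
  rcases map_add_or_map_add (continuous_sub_mul_supportFun hne₁ hc₁ hne₂ hc₂ μ)
    (continuous_sub_mul_supportFun hne₁ hc₁ hne₂.neg hc₂.neg μ) (sub_mul_supportFun_smul hwidth)
    (sub_mul_supportFun_smul hwidth') fun u v => by
      obtain ⟨z, l, hl, hS⟩ := h u v
      exact isAdditiveOn_or_isAdditiveOn_of_supportFun_eq hne₂ hc₂ hS hwidth
    with hadd | hadd
  · obtain ⟨z, hz⟩ := exists_supportFun_eq_of_map_add hne₁ hc₁ hne₂ hc₂ hwidth hadd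
    exact homothetic_of_supportFun_eq hne₁ hc₁ hcv₁ hne₂ hc₂ hcv₂ hμ.ne' fun u => by
      rw [hz, supportFun_smul hμ.le]
  · obtain ⟨z, hz⟩ := exists_supportFun_eq_of_map_add hne₁ hc₁ hne₂.neg hc₂.neg hwidth' hadd
    exact homothetic_of_supportFun_eq hne₁ hc₁ hcv₁ hne₂ hc₂ hcv₂ (neg_ne_zero.mpr hμ.ne')
      fun u => by rw [hz, supportFun_smul_of_nonpos (neg_nonpos.mpr hμ.le), neg_neg]

end Homothety

theorem homothetic_iff_projections_homothetic_compact_general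
    (n m : ℕ) (hm₁ : 2 ≤ m) (hm₂ : m ≤ n - 1)
    (K₁ K₂ : Set (EuclideanSpace ℝ (Fin n)))
    (hne₁ : K₁.Nonempty) (hne₂ : K₂.Nonempty)
    (hc₁ : IsCompact K₁) (hc₂ : IsCompact K₂)
    (hcv₁ : Convex ℝ K₁) (hcv₂ : Convex ℝ K₂) :
    Homothetic K₁ K₂ ↔
      ∀ (p : EuclideanSpace ℝ (Fin n)) (L : Submodule ℝ (EuclideanSpace ℝ (Fin n))),
        Module.finrank ℝ L = m →
        Homothetic (planeProj p L '' K₁) (planeProj p L '' K₂) := by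
  refine ⟨fun h p L _ => h.image_affineMap (planeProjAffineMap p L), fun hproj => ?_⟩
  refine homothetic_of_forall_span_pair hne₁ hc₁ hcv₁ hne₂ hc₂ hcv₂ fun u v => ?_
  obtain ⟨L, hle, hL⟩ := (span ℝ {u, v}).exists_le_finrank_eq
    ((finrank_span_pair_le u v).trans hm₁) (by rw [finrank_euclideanSpace_fin]; omega)
  obtain ⟨z, l, hl, hS⟩ :=
    exists_supportFun_eq_on_of_homothetic_planeProj hne₂ hc₂ (hproj 0 L hL)
  exact ⟨z, l, hl, fun x hx => hS x (hle hx)⟩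

/-- Compact convex sets `K₁` and `K₂` in `ℝⁿ` are homothetic if and only if, for a fixed
`m` with `2 ≤ m ≤ n - 1`, their orthogonal projections on every `m`-dimensional plane
of `ℝⁿ` are homothetic. -/
theorem homothetic_iff_projections_homothetic_compact
    (n m : ℕ) (hn : 3 ≤ n) (hm₁ : 2 ≤ m) (hm₂ : m ≤ n - 1)
    (K₁ K₂ : Set (EuclideanSpace ℝ (Fin n)))
    (hne₁ : K₁.Nonempty) (hne₂ : K₂.Nonempty)
    (hc₁ : IsCompact K₁) (hc₂ : IsCompact K₂)
    (hcv₁ : Convex ℝ K₁) (hcv₂ : Convex ℝ K₂) :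
    Homothetic K₁ K₂ ↔
      ∀ (p : EuclideanSpace ℝ (Fin n)) (L : Submodule ℝ (EuclideanSpace ℝ (Fin n))),
        Module.finrank ℝ L = m →
        Homothetic (planeProj p L '' K₁) (planeProj p L '' K₂) :=
  homothetic_iff_projections_homothetic_compact_general n m hm₁ hm₂ K₁ K₂ hne₁ hne₂ hc₁ hc₂ hcv₁
    hcv₂
end

section
/- Every compact convex set K ⊂ ℝⁿ that is not a singleton (and is nonempty) equals the closed convex hull of the set of its antipodally exposed points. -/
open scoped RealInnerProductSpace

/-- A point `x` of `K` is *antipodally exposed* provided there exist distinct parallel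
hyperplanes `{y : ⟪g, y⟫ = α}` and `{y : ⟪g, y⟫ = β}` (with `g ≠ 0`, `α ≠ β`), both
supporting `K`, which meet `K` exactly in `{x}` and in a singleton `{z}`, respectively. -/
def AntipodallyExposedPoints {n : ℕ} (K : Set (EuclideanSpace ℝ (Fin n))) :
    Set (EuclideanSpace ℝ (Fin n)) :=
  {x | ∃ (z g : EuclideanSpace ℝ (Fin n)) (α β : ℝ), g ≠ 0 ∧ α ≠ β ∧
    (∀ y ∈ K, β ≤ ⟪g, y⟫ ∧ ⟪g, y⟫ ≤ α) ∧
    {y ∈ K | ⟪g, y⟫ = α} = {x} ∧ {y ∈ K | ⟪g, y⟫ = β} = {z}}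

/-!
For a direction `g`, maximise `Φ (p, q) = ‖p - q‖² + ⟪g, p - q⟫` over `K × K`. At a maximiser
`(x, z)` the first variation of `Φ` in each variable shows that `x` is the unique maximiser and
`z` the unique minimiser on `K` of `⟪w, ·⟫`, where `w = 2 (x - z) + g`; so `x` is antipodally
exposed. Comparing `Φ (u, z)` with `Φ (x, z)` shows that `⟪g, ·⟫` exceeds `⟪g, x⟫` on `K` by at
most `‖x - z‖² ≤ (diam K)²`. Replacing `g` by a large multiple makes this defect negligible, so
every functional is almost maximised on `K` at antipodally exposed points, and a separating
hyperplane argument finishes the proof.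
-/

section InnerProductSpace

variable {E : Type*} [NormedAddCommGroup E] [InnerProductSpace ℝ E]

theorem norm_sub_sq_add_inner_sub_sub_left (g x y z : E) :
    ‖y - z‖ ^ 2 + ⟪g, y - z⟫ - (‖x - z‖ ^ 2 + ⟪g, x - z⟫) =
      ‖y - x‖ ^ 2 + ⟪(2 : ℝ) • (x - z) + g, y - x⟫ := by
  rw [show y - z = (y - x) + (x - z) by abel, norm_add_sq_real, inner_add_right,
    inner_add_left, real_inner_smul_left, real_inner_comm (x - z)]
  ring

theorem norm_sub_sq_add_inner_sub_sub_right (g x y z : E) :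
    ‖x - y‖ ^ 2 + ⟪g, x - y⟫ - (‖x - z‖ ^ 2 + ⟪g, x - z⟫) =
      ‖y - z‖ ^ 2 - ⟪(2 : ℝ) • (x - z) + g, y - z⟫ := by
  rw [show x - y = (x - z) - (y - z) by abel, norm_sub_sq_real]
  simp only [inner_sub_right, inner_add_left, real_inner_smul_left]
  ring

variable {K : Set E} {g x z : E}

theorem IsMaxOn.inner_lt_left
    (hmax : IsMaxOn (fun p : E × E ↦ ‖p.1 - p.2‖ ^ 2 + ⟪g, p.1 - p.2⟫) (K ×ˢ K) (x, z))
    (hz : z ∈ K) {y : E} (hy : y ∈ K) (hyx : y ≠ x) :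
    ⟪(2 : ℝ) • (x - z) + g, y⟫ < ⟪(2 : ℝ) • (x - z) + g, x⟫ := by
  have hΦ : ‖y - z‖ ^ 2 + ⟪g, y - z⟫ ≤ ‖x - z‖ ^ 2 + ⟪g, x - z⟫ := hmax (Set.mk_mem_prod hy hz)
  have h := (norm_sub_sq_add_inner_sub_sub_left g x y z).symm.trans_le (sub_nonpos.2 hΦ)
  have hpos : 0 < ‖y - x‖ ^ 2 := by positivity [sub_ne_zero.2 hyx]
  rw [inner_sub_right] at h
  linarith

theorem IsMaxOn.inner_lt_right
    (hmax : IsMaxOn (fun p : E × E ↦ ‖p.1 - p.2‖ ^ 2 + ⟪g, p.1 - p.2⟫) (K ×ˢ K) (x, z))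
    (hx : x ∈ K) {y : E} (hy : y ∈ K) (hyz : y ≠ z) :
    ⟪(2 : ℝ) • (x - z) + g, z⟫ < ⟪(2 : ℝ) • (x - z) + g, y⟫ := by
  have hΦ : ‖x - y‖ ^ 2 + ⟪g, x - y⟫ ≤ ‖x - z‖ ^ 2 + ⟪g, x - z⟫ := hmax (Set.mk_mem_prod hx hy)
  have h := (norm_sub_sq_add_inner_sub_sub_right g x y z).symm.trans_le (sub_nonpos.2 hΦ)
  have hpos : 0 < ‖y - z‖ ^ 2 := by positivity [sub_ne_zero.2 hyz]
  rw [inner_sub_right] at h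
  linarith

theorem IsMaxOn.inner_le_add_norm_sub_sq
    (hmax : IsMaxOn (fun p : E × E ↦ ‖p.1 - p.2‖ ^ 2 + ⟪g, p.1 - p.2⟫) (K ×ˢ K) (x, z))
    (hz : z ∈ K) {u : E} (hu : u ∈ K) :
    ⟪g, u⟫ ≤ ⟪g, x⟫ + ‖x - z‖ ^ 2 := by
  have hΦ : ‖u - z‖ ^ 2 + ⟪g, u - z⟫ ≤ ‖x - z‖ ^ 2 + ⟪g, x - z⟫ := hmax (Set.mk_mem_prod hu hz)
  simp only [inner_sub_right] at hΦ
  nlinarith [sq_nonneg ‖u - z‖]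

theorem IsMaxOn.ne_of_nontrivial (hK : K.Nontrivial)
    (hmax : IsMaxOn (fun p : E × E ↦ ‖p.1 - p.2‖ ^ 2 + ⟪g, p.1 - p.2⟫) (K ×ˢ K) (x, z)) :
    x ≠ z := by
  obtain ⟨a, ha, b, hb, hab⟩ := hK
  have hab' : ‖a - b‖ ^ 2 + ⟪g, a - b⟫ ≤ ‖x - z‖ ^ 2 + ⟪g, x - z⟫ := hmax (Set.mk_mem_prod ha hb)
  have hba' : ‖b - a‖ ^ 2 + ⟪g, b - a⟫ ≤ ‖x - z‖ ^ 2 + ⟪g, x - z⟫ := hmax (Set.mk_mem_prod hb ha)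
  have hpos : 0 < ‖a - b‖ ^ 2 := by positivity [sub_ne_zero.2 hab]
  rintro rfl
  simp only [sub_self, norm_zero, inner_zero_right, inner_sub_right, norm_sub_rev b a] at hab' hba'
  linarith

theorem mem_closure_convexHull_of_forall_inner_lt_add [CompleteSpace E] {A : Set E} {u : E}
    (h : ∀ g : E, ∀ ε > 0, ∃ x ∈ A, ⟪g, u⟫ < ⟪g, x⟫ + ε) :
    u ∈ closure (convexHull ℝ A) := by
  by_contra hu
  obtain ⟨f, s, hfA, hfu⟩ :=
    geometric_hahn_banach_closed_point (convex_convexHull ℝ A).closure isClosed_closure hu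
  obtain ⟨x, hxA, hx⟩ := h ((InnerProductSpace.toDual ℝ E).symm f) (f u - s) (sub_pos.2 hfu)
  simp only [InnerProductSpace.toDual_symm_apply] at hx
  linarith [hfA x (subset_closure (subset_convexHull ℝ A hxA))]

end InnerProductSpace

section Euclidean

variable {n : ℕ} {K : Set (EuclideanSpace ℝ (Fin n))}

theorem antipodallyExposedPoints_subset : AntipodallyExposedPoints K ⊆ K := by
  rintro x ⟨z, g, α, β, -, -, -, hx, -⟩
  exact (hx.symm ▸ Set.mem_singleton x : x ∈ {y ∈ K | ⟪g, y⟫ = α}).1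

theorem mem_antipodallyExposedPoints_of_inner_lt {w x z : EuclideanSpace ℝ (Fin n)}
    (hx : x ∈ K) (hz : z ∈ K) (hxz : x ≠ z)
    (hmax : ∀ y ∈ K, y ≠ x → ⟪w, y⟫ < ⟪w, x⟫) (hmin : ∀ y ∈ K, y ≠ z → ⟪w, z⟫ < ⟪w, y⟫) :
    x ∈ AntipodallyExposedPoints K := by
  have hzx : ⟪w, z⟫ < ⟪w, x⟫ := hmax z hz hxz.symm
  refine ⟨z, w, ⟪w, x⟫, ⟪w, z⟫, ?_, hzx.ne', fun y hy ↦ ⟨?_, ?_⟩, ?_, ?_⟩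
  · rintro rfl
    simp at hzx
  · rcases eq_or_ne y z with rfl | hyz
    exacts [le_rfl, (hmin y hy hyz).le]
  · rcases eq_or_ne y x with rfl | hyx
    exacts [le_rfl, (hmax y hy hyx).le]
  · ext y
    refine ⟨fun ⟨hy, hyx⟩ ↦ by_contra fun h ↦ (hmax y hy h).ne hyx, ?_⟩
    rintro rfl
    exact ⟨hx, rfl⟩
  · ext y
    refine ⟨fun ⟨hy, hyz⟩ ↦ by_contra fun h ↦ (hmin y hy h).ne' hyz, ?_⟩
    rintro rfl
    exact ⟨hz, rfl⟩

theorem exists_mem_antipodallyExposedPoints_inner_lt_add (hc : IsCompact K) (hK : K.Nontrivial)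
    (g : EuclideanSpace ℝ (Fin n)) {ε : ℝ} (hε : 0 < ε) :
    ∃ x ∈ AntipodallyExposedPoints K, ∀ u ∈ K, ⟪g, u⟫ < ⟪g, x⟫ + ε := by
  set D := Metric.diam K ^ 2
  set c := (D + 1) / ε
  have hc_pos : 0 < c := by positivity
  have hcε : c * ε = D + 1 := div_mul_cancel₀ _ hε.ne'
  obtain ⟨⟨x, z⟩, ⟨hx, hz⟩, hmax⟩ := (hc.prod hc).exists_isMaxOn (hK.nonempty.prod hK.nonempty)
    (f := fun p ↦ ‖p.1 - p.2‖ ^ 2 + ⟪c • g, p.1 - p.2⟫) (by fun_prop)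
  refine ⟨x, mem_antipodallyExposedPoints_of_inner_lt hx hz (hmax.ne_of_nontrivial hK)
    (fun y hy hyx ↦ hmax.inner_lt_left hz hy hyx) (fun y hy hyz ↦ hmax.inner_lt_right hx hy hyz),
    fun u hu ↦ ?_⟩
  have hxz : ‖x - z‖ ^ 2 ≤ D := by
    rw [← dist_eq_norm]
    exact pow_le_pow_left₀ dist_nonneg (Metric.dist_le_diam_of_mem hc.isBounded hx hz) 2
  have hu := hmax.inner_le_add_norm_sub_sq hz hu
  rw [real_inner_smul_left, real_inner_smul_left] at hu
  refine lt_of_mul_lt_mul_left ?_ hc_pos.le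
  linarith

end Euclidean

theorem eq_closure_convexHull_antipodallyExposedPoints_general
    (n : ℕ) (K : Set (EuclideanSpace ℝ (Fin n)))
    (hc : IsCompact K) (hcv : Convex ℝ K)
    (hns : ∀ x, K ≠ {x}) :
    K = closure (convexHull ℝ (AntipodallyExposedPoints K)) := by
  refine (closure_minimal (convexHull_min antipodallyExposedPoints_subset hcv)
    hc.isClosed).antisymm' fun u hu ↦ ?_
  have hK : K.Nontrivial :=
    (Set.nonempty_of_mem hu).exists_eq_singleton_or_nontrivial.resolve_left fun ⟨a, ha⟩ ↦ hns a ha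
  refine mem_closure_convexHull_of_forall_inner_lt_add fun g ε hε ↦ ?_
  obtain ⟨x, hx, hgx⟩ := exists_mem_antipodallyExposedPoints_inner_lt_add hc hK g hε
  exact ⟨x, hx, hgx u hu⟩

/-- Any compact convex set `K ⊆ ℝⁿ` distinct from a singleton is the closed convex hull
of its antipodally exposed points. -/
theorem eq_closure_convexHull_antipodallyExposedPoints
    (n : ℕ) (K : Set (EuclideanSpace ℝ (Fin n)))
    (hne : K.Nonempty) (hc : IsCompact K) (hcv : Convex ℝ K)
    (hns : ∀ x, K ≠ {x}) :
    K = closure (convexHull ℝ (AntipodallyExposedPoints K)) :=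
  eq_closure_convexHull_antipodallyExposedPoints_general n K hc hcv hns
end

section
/- Let K ⊂ ℝⁿ be a nonempty compact convex set and let f be a unit vector in ℝⁿ. Then for every ε > 0 there exists a closed halfspace P ⊂ ℝⁿ supporting K such that K ∩ P is a singleton and the inward unit normal g of P satisfies ‖f − g‖ ≤ ε. -/
open scoped RealInnerProductSpace

/-!
Put a far point `z = c - R • f` behind `K` in the direction `-f` and let `x` be a point of `K`
farthest from `z`. The ball about `z` through `x` contains `K`, so its tangent halfspace at `x`,
with inward normal `g = (x - z) / ‖x - z‖`, supports `K`; by strict convexity of the ball it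
meets `K` only at `x`. If `K ⊆ closedBall c D`, then `x - z = (x - c) + R • f` is within `D`
of `R • f`, so `‖x - z‖ ≥ R - D` and `g` is within `2D / ‖x - z‖` of `f`; `R = D + 2D / ε` works.
-/

section FarthestPoint

variable {E : Type*} [NormedAddCommGroup E] [InnerProductSpace ℝ E]

theorem two_mul_inner_sub_le_neg_sq_of_norm_sub_le {x y z : E} (h : ‖y - z‖ ≤ ‖x - z‖) :
    2 * ⟪x - z, y - x⟫ ≤ -‖y - x‖ ^ 2 := by
  have hsq : ‖y - z‖ ^ 2 ≤ ‖x - z‖ ^ 2 := pow_le_pow_left₀ (norm_nonneg _) h 2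
  have hexp : ‖y - z‖ ^ 2 = ‖y - x‖ ^ 2 + 2 * ⟪y - x, x - z⟫ + ‖x - z‖ ^ 2 := by
    rw [← norm_add_sq_real, sub_add_sub_cancel]
  rw [real_inner_comm]
  linarith

variable {K : Set E} {x z : E} {t : ℝ}

theorem inner_smul_sub_le_of_isMaxOn_norm_sub (hmax : IsMaxOn (‖· - z‖) K x) (ht : 0 ≤ t)
    {y : E} (hy : y ∈ K) :
    2 * (⟪t • (x - z), y⟫ - ⟪t • (x - z), x⟫) ≤ -t * ‖y - x‖ ^ 2 := by
  have key := two_mul_inner_sub_le_neg_sq_of_norm_sub_le (hmax hy)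
  rw [← inner_sub_right, real_inner_smul_left]
  nlinarith

theorem inner_le_of_isMaxOn_norm_sub (hmax : IsMaxOn (‖· - z‖) K x) (ht : 0 ≤ t) :
    ∀ y ∈ K, ⟪t • (x - z), y⟫ ≤ ⟪t • (x - z), x⟫ := fun y hy => by
  have := inner_smul_sub_le_of_isMaxOn_norm_sub hmax ht hy
  nlinarith [sq_nonneg ‖y - x‖]

theorem inter_setOf_le_inner_eq_singleton_of_isMaxOn_norm_sub (hx : x ∈ K)
    (hmax : IsMaxOn (‖· - z‖) K x) (ht : 0 < t) :
    K ∩ {y | ⟪t • (x - z), x⟫ ≤ ⟪t • (x - z), y⟫} = {x} := by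
  refine Set.eq_singleton_iff_unique_mem.2 ⟨by simp [hx], ?_⟩
  rintro y ⟨hy, hle⟩
  have := inner_smul_sub_le_of_isMaxOn_norm_sub hmax ht.le hy
  have hsq : t * ‖y - x‖ ^ 2 ≤ 0 := by simp only [Set.mem_ofPred_eq] at hle; linarith
  simpa [sub_eq_zero] using nonpos_of_mul_nonpos_right hsq ht

theorem mul_norm_sub_inv_norm_smul_le {f : E} (hf : ‖f‖ = 1) (w : E) {R : ℝ} (hR : 0 ≤ R) :
    ‖w‖ * ‖f - ‖w‖⁻¹ • w‖ ≤ 2 * ‖w - R • f‖ := by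
  have hid : ‖w‖ • (f - ‖w‖⁻¹ • w) = (‖w‖ - R) • f - (w - R • f) := by
    rcases eq_or_ne w 0 with rfl | hw
    · simp
    rw [smul_sub, smul_inv_smul₀ (norm_ne_zero_iff.2 hw), sub_smul]
    abel
  have hdist : |‖w‖ - R| ≤ ‖w - R • f‖ := by
    simpa [norm_smul, hf, abs_of_nonneg hR] using abs_norm_sub_norm_le w (R • f)
  calc ‖w‖ * ‖f - ‖w‖⁻¹ • w‖ = ‖(‖w‖ - R) • f - (w - R • f)‖ := by
        rw [← hid, norm_smul, norm_norm]
    _ ≤ |‖w‖ - R| + ‖w - R • f‖ := by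
        simpa [norm_smul, hf] using norm_sub_le ((‖w‖ - R) • f) (w - R • f)
    _ ≤ 2 * ‖w - R • f‖ := by linarith

end FarthestPoint

theorem exists_supporting_halfspace_singleton_inter_general
    (n : ℕ) (K : Set (EuclideanSpace ℝ (Fin n)))
    (hne : K.Nonempty) (hc : IsCompact K)
    (f : EuclideanSpace ℝ (Fin n)) (hf : ‖f‖ = 1) (ε : ℝ) (hε : 0 < ε) :
    ∃ (g : EuclideanSpace ℝ (Fin n)) (α : ℝ), ‖g‖ = 1 ∧ ‖f - g‖ ≤ ε ∧
      (∀ y ∈ K, ⟪g, y⟫ ≤ α) ∧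
      ∃ x : EuclideanSpace ℝ (Fin n), K ∩ {y | α ≤ ⟪g, y⟫} = {x} := by
  obtain ⟨c, hcK⟩ := hne
  obtain ⟨D, hD, hKD⟩ := hc.isBounded.subset_closedBall_lt 0 c
  set R := D + 2 * D / ε
  set z := c - R • f
  obtain ⟨x, hxK, hmax⟩ := hc.exists_isMaxOn ⟨c, hcK⟩
    (continuous_id.sub continuous_const).norm.continuousOn (f := fun y => ‖y - z‖)
  have hxc : ‖(x - z) - R • f‖ ≤ D := by
    rw [show x - z - R • f = x - c by simp only [z]; abel]
    simpa [dist_eq_norm] using hKD hxK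
  have hr : 2 * D / ε ≤ ‖x - z‖ := by
    have : ‖R • f‖ = R := by rw [norm_smul, hf, mul_one, Real.norm_of_nonneg (by positivity)]
    linarith [norm_sub_norm_le (R • f) (x - z), norm_sub_rev (R • f) (x - z)]
  have hr0 : 0 < ‖x - z‖ := lt_of_lt_of_le (by positivity) hr
  refine ⟨‖x - z‖⁻¹ • (x - z), _, norm_smul_inv_norm (𝕜 := ℝ) (norm_pos_iff.1 hr0), ?_,
    inner_le_of_isMaxOn_norm_sub hmax (by positivity), x,
    inter_setOf_le_inner_eq_singleton_of_isMaxOn_norm_sub hxK hmax (inv_pos.2 hr0)⟩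
  refine le_of_mul_le_mul_left ?_ hr0
  calc ‖x - z‖ * ‖f - ‖x - z‖⁻¹ • (x - z)‖ ≤ 2 * D := by
        linarith [mul_norm_sub_inv_norm_smul_le hf (x - z) (R := R) (by positivity)]
    _ = ε * (2 * D / ε) := by field_simp
    _ ≤ ‖x - z‖ * ε := by rw [mul_comm]; gcongr

/-- For any nonempty compact convex set `K ⊆ ℝⁿ`, any unit vector `f` and any `ε > 0`,
there is a closed halfspace `P = {y : α ≤ ⟪g, y⟫}` supporting `K` whose inward unit
normal `g` satisfies `‖f - g‖ ≤ ε` and such that `K ∩ P` is a singleton. -/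
theorem exists_supporting_halfspace_singleton_inter
    (n : ℕ) (K : Set (EuclideanSpace ℝ (Fin n)))
    (hne : K.Nonempty) (hc : IsCompact K) (hcv : Convex ℝ K)
    (f : EuclideanSpace ℝ (Fin n)) (hf : ‖f‖ = 1) (ε : ℝ) (hε : 0 < ε) :
    ∃ (g : EuclideanSpace ℝ (Fin n)) (α : ℝ), ‖g‖ = 1 ∧ ‖f - g‖ ≤ ε ∧
      (∀ y ∈ K, ⟪g, y⟫ ≤ α) ∧
      ∃ x : EuclideanSpace ℝ (Fin n), K ∩ {y | α ≤ ⟪g, y⟫} = {x} :=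
  exists_supporting_halfspace_singleton_inter_general n K hne hc f hf ε hε
end

section
/- Let K ⊂ ℝⁿ be a compact convex set with more than one point and let f be a unit vector in ℝⁿ. Then for every ε > 0 there exist a unit vector g ∈ ℝⁿ with ‖f − g‖ ≤ ε and opposite closed halfspaces S and T with common normal direction g, both supporting K, such that K ∩ S and K ∩ T are distinct singletons. -/
/-!
The support function `h_K(x) = sup_{y ∈ K} ⟪x, y⟫` is Lipschitz, so by Rademacher's theorem
the points `x` at which `h_K` is differentiable at both `x` and `-x` are dense. Where `h_K` is
differentiable at `x`, its derivative is `⟪w, ·⟫` for every maximiser `w` of `⟪x, ·⟫` on `K`,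
so that maximiser is unique. Hence there is a unit vector `g` close to `f` such that `⟪g, ·⟫`
has a unique maximiser `u` and a unique minimiser `v` on `K`, and the halfspaces
`⟪g, ·⟫ ≥ ⟪g, u⟫` and `⟪g, ·⟫ ≤ ⟪g, v⟫` work. Finally `u ≠ v`, since otherwise `⟪g, ·⟫` is
constant on `K` and every point of `K` maximises it.
-/

open scoped RealInnerProductSpace
open Set Metric

section Extrema

variable {α β : Type*} [Preorder β] {f : α → β} {s : Set α} {a b : α}

theorem inter_setOf_le_eq_singleton_of_isMaxOn (ha : a ∈ s) (hmax : IsMaxOn f s a)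
    (huniq : {x ∈ s | IsMaxOn f s x}.Subsingleton) : s ∩ {x | f a ≤ f x} = {a} := by
  ext x
  constructor
  · rintro ⟨hx, hle⟩
    exact huniq ⟨hx, fun y hy => le_trans (hmax hy) hle⟩ ⟨ha, hmax⟩
  · rintro rfl
    exact ⟨ha, le_rfl⟩

theorem inter_setOf_le_eq_singleton_of_isMinOn (ha : a ∈ s) (hmin : IsMinOn f s a)
    (huniq : {x ∈ s | IsMinOn f s x}.Subsingleton) : s ∩ {x | f x ≤ f a} = {a} :=
  inter_setOf_le_eq_singleton_of_isMaxOn (β := βᵒᵈ) ha hmin huniq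

theorem Set.Nontrivial.ne_of_isMaxOn_of_isMinOn (hs : s.Nontrivial) (hmax : IsMaxOn f s a)
    (hmin : IsMinOn f s b) (huniq : {x ∈ s | IsMaxOn f s x}.Subsingleton) : a ≠ b := by
  rintro rfl
  obtain ⟨x, hx, y, hy, hxy⟩ := hs
  have hall : ∀ z ∈ s, IsMaxOn f s z := fun z hz w hw => le_trans (hmax hw) (hmin hz)
  exact hxy (huniq ⟨hx, hall x hx⟩ ⟨hy, hall y hy⟩)

end Extrema

theorem LipschitzWith.dense_differentiableAt_and_neg {E F : Type*} [NormedAddCommGroup E]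
    [NormedSpace ℝ E] [FiniteDimensional ℝ E] [NormedAddCommGroup F] [NormedSpace ℝ F]
    [FiniteDimensional ℝ F] {C : NNReal} {f : E → F} (hf : LipschitzWith C f) :
    Dense {x | DifferentiableAt ℝ f x ∧ DifferentiableAt ℝ f (-x)} := by
  borelize E
  let neg : E ≃L[ℝ] E := ContinuousLinearEquiv.neg ℝ
  refine MeasureTheory.Measure.dense_of_ae (μ := (Module.finBasis ℝ E).addHaar) ?_
  filter_upwards [hf.ae_differentiableAt, (hf.comp neg.lipschitz).ae_differentiableAt]
    with x hx hx_neg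
  exact ⟨hx, neg.comp_right_differentiableAt_iff.1 hx_neg⟩

theorem norm_sub_inv_norm_smul_le {E : Type*} [NormedAddCommGroup E] [NormedSpace ℝ E]
    {f : E} (hf : ‖f‖ = 1) (x : E) : ‖f - ‖x‖⁻¹ • x‖ ≤ 2 * ‖f - x‖ := by
  rcases eq_or_ne x 0 with rfl | hx
  · simp [hf]
  have hnorm : ‖x - ‖x‖⁻¹ • x‖ = |‖x‖ - ‖f‖| := calc
    ‖x - ‖x‖⁻¹ • x‖ = |(1 - ‖x‖⁻¹) * ‖x‖| := by
      rw [abs_mul, abs_norm, ← Real.norm_eq_abs, ← norm_smul, sub_smul, one_smul]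
    _ = |‖x‖ - ‖f‖| := by
      rw [hf, sub_mul, one_mul, inv_mul_cancel₀ (norm_ne_zero_iff.2 hx)]
  calc ‖f - ‖x‖⁻¹ • x‖ ≤ ‖f - x‖ + ‖x - ‖x‖⁻¹ • x‖ :=
        norm_sub_le_norm_sub_add_norm_sub _ _ _
    _ ≤ ‖f - x‖ + ‖x - f‖ := by rw [hnorm]; gcongr; exact abs_norm_sub_norm_le x f
    _ = 2 * ‖f - x‖ := by rw [norm_sub_rev x f]; ring

section InnerProductSpace

variable {E : Type*} [NormedAddCommGroup E] [InnerProductSpace ℝ E]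

theorem isMaxOn_inner_smul_left_iff {c : ℝ} (hc : 0 < c) {x u : E} {K : Set E} :
    IsMaxOn (⟪c • x, ·⟫) K u ↔ IsMaxOn (⟪x, ·⟫) K u := by
  simp only [isMaxOn_iff, real_inner_smul_left, mul_le_mul_iff_right₀ hc]

theorem isMinOn_inner_iff_isMaxOn_neg {x u : E} {K : Set E} :
    IsMinOn (⟪x, ·⟫) K u ↔ IsMaxOn (⟪-x, ·⟫) K u := by
  simp only [isMaxOn_iff, isMinOn_iff, inner_neg_left, neg_le_neg_iff]

noncomputable def supportFunction (K : Set E) (x : E) : ℝ :=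
  sSup ((⟪x, ·⟫) '' K)

namespace supportFunction

variable {K : Set E}

theorem inner_le (hK : Bornology.IsBounded K) {y : E} (hy : y ∈ K) (x : E) :
    ⟪x, y⟫ ≤ supportFunction K x :=
  le_csSup ((innerSL ℝ x).lipschitz.isBounded_image hK).bddAbove (mem_image_of_mem _ hy)

theorem eq_inner_of_isMaxOn {x u : E} (hu : u ∈ K) (hmax : IsMaxOn (⟪x, ·⟫) K u) :
    supportFunction K x = ⟪x, u⟫ :=
  IsGreatest.csSup_eq ⟨mem_image_of_mem _ hu, forall_mem_image.2 fun _ hy => hmax hy⟩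

theorem lipschitzWith {R : ℝ} (hne : K.Nonempty) (hR : ∀ y ∈ K, ‖y‖ ≤ R) :
    LipschitzWith R.toNNReal (supportFunction K) := by
  have hK : Bornology.IsBounded K := isBounded_iff_forall_norm_le.2 ⟨R, hR⟩
  refine LipschitzWith.of_le_add_mul' R fun a b => csSup_le (hne.image _) ?_
  rintro _ ⟨y, hy, rfl⟩
  calc ⟪a, y⟫ = ⟪b, y⟫ + ⟪a - b, y⟫ := by rw [inner_sub_left]; ring
    _ ≤ supportFunction K b + ‖a - b‖ * ‖y‖ :=
      add_le_add (inner_le hK hy b) (real_inner_le_norm _ _)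
    _ ≤ supportFunction K b + R * dist a b := by
      rw [dist_eq_norm, mul_comm R]; gcongr; exact hR y hy

theorem fderiv_eq_innerSL (hK : Bornology.IsBounded K) {x w : E}
    (hd : DifferentiableAt ℝ (supportFunction K) x) (hw : w ∈ K)
    (hmax : IsMaxOn (⟪x, ·⟫) K w) :
    fderiv ℝ (supportFunction K) x = innerSL ℝ w := by
  have hmin : IsLocalMin (fun z => supportFunction K z - innerSL ℝ w z) x :=
    Filter.Eventually.of_forall fun z => by
      simp only [innerSL_apply_apply, eq_inner_of_isMaxOn hw hmax, real_inner_comm x w, sub_self,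
        sub_nonneg]
      exact (real_inner_comm z w).trans_le (inner_le hK hw z)
  exact sub_eq_zero.1 (hmin.hasFDerivAt_eq_zero (hd.hasFDerivAt.sub (innerSL ℝ w).hasFDerivAt))

theorem subsingleton_isMaxOn_of_differentiableAt (hK : Bornology.IsBounded K) {x : E}
    (hd : DifferentiableAt ℝ (supportFunction K) x) :
    {u ∈ K | IsMaxOn (⟪x, ·⟫) K u}.Subsingleton := by
  rintro u ⟨hu, hmu⟩ v ⟨hv, hmv⟩
  have h := (fderiv_eq_innerSL hK hd hu hmu).symm.trans (fderiv_eq_innerSL hK hd hv hmv)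
  exact ext_inner_right ℝ fun z => by simpa only [innerSL_apply_apply] using congr($h z)

end supportFunction

theorem exists_norm_eq_one_near_unique_inner_extrema [FiniteDimensional ℝ E] {K : Set E}
    (hK : Bornology.IsBounded K) (hne : K.Nonempty) {f : E} (hf : ‖f‖ = 1) {ε : ℝ}
    (hε : 0 < ε) :
    ∃ g : E, ‖g‖ = 1 ∧ ‖f - g‖ ≤ ε ∧ {u ∈ K | IsMaxOn (⟪g, ·⟫) K u}.Subsingleton ∧
      {v ∈ K | IsMinOn (⟪g, ·⟫) K v}.Subsingleton := by
  obtain ⟨R, hR⟩ := hK.exists_norm_le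
  have hδ : 0 < min (ε / 2) 1 := lt_min (half_pos hε) one_pos
  obtain ⟨g', ⟨hd, hd_neg⟩, hg'f⟩ :=
    (supportFunction.lipschitzWith hne hR).dense_differentiableAt_and_neg.exists_mem_open
      isOpen_ball (nonempty_ball.2 hδ)
  have hfg' : ‖f - g'‖ < min (ε / 2) 1 := by rwa [mem_ball', dist_eq_norm] at hg'f
  have hg'0 : g' ≠ 0 := by
    rintro rfl
    simp only [sub_zero, hf, lt_min_iff, lt_irrefl, and_false] at hfg'
  have hc : 0 < ‖g'‖⁻¹ := inv_pos.2 (norm_pos_iff.2 hg'0)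
  refine ⟨‖g'‖⁻¹ • g', norm_smul_inv_norm hg'0,
    (norm_sub_inv_norm_smul_le hf g').trans (by linarith [min_le_left (ε / 2) 1]), ?_, ?_⟩
  · simpa only [isMaxOn_inner_smul_left_iff hc] using
      supportFunction.subsingleton_isMaxOn_of_differentiableAt hK hd
  · simpa only [isMinOn_inner_iff_isMaxOn_neg, ← smul_neg, isMaxOn_inner_smul_left_iff hc] using
      supportFunction.subsingleton_isMaxOn_of_differentiableAt hK hd_neg

end InnerProductSpace

theorem exists_opposite_supporting_halfspaces_singleton_inters_general
    (n : ℕ) (K : Set (EuclideanSpace ℝ (Fin n)))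
    (hc : IsCompact K)
    (hpts : ∃ a ∈ K, ∃ b ∈ K, a ≠ b)
    (f : EuclideanSpace ℝ (Fin n)) (hf : ‖f‖ = 1) (ε : ℝ) (hε : 0 < ε) :
    ∃ (g : EuclideanSpace ℝ (Fin n)) (α β : ℝ), ‖g‖ = 1 ∧ ‖f - g‖ ≤ ε ∧ β ≤ α ∧
      (∀ y ∈ K, β ≤ ⟪g, y⟫ ∧ ⟪g, y⟫ ≤ α) ∧
      ∃ u v : EuclideanSpace ℝ (Fin n), u ≠ v ∧
        K ∩ {y | α ≤ ⟪g, y⟫} = {u} ∧ K ∩ {y | ⟪g, y⟫ ≤ β} = {v} := by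
  have hne : K.Nonempty := let ⟨a, ha, _⟩ := hpts; ⟨a, ha⟩
  obtain ⟨g, hg, hfg, hmax_uniq, hmin_uniq⟩ :=
    exists_norm_eq_one_near_unique_inner_extrema hc.isBounded hne hf hε
  have hcont : ContinuousOn (⟪g, ·⟫) K := by fun_prop
  obtain ⟨u, hu, humax⟩ := hc.exists_isMaxOn hne hcont
  obtain ⟨v, hv, hvmin⟩ := hc.exists_isMinOn hne hcont
  exact ⟨g, ⟪g, u⟫, ⟪g, v⟫, hg, hfg, hvmin hu, fun y hy => ⟨hvmin hy, humax hy⟩, u, v,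
    Set.Nontrivial.ne_of_isMaxOn_of_isMinOn hpts humax hvmin hmax_uniq,
    inter_setOf_le_eq_singleton_of_isMaxOn hu humax hmax_uniq,
    inter_setOf_le_eq_singleton_of_isMinOn hv hvmin hmin_uniq⟩

/-- For any compact convex set `K ⊆ ℝⁿ` with more than one point, any unit vector `f`
and any `ε > 0`, there are a unit vector `g` with `‖f - g‖ ≤ ε` and opposite closed
halfspaces `S = {y : α ≤ ⟪g, y⟫}` and `T = {y : ⟪g, y⟫ ≤ β}` (with `β ≤ α`), both
supporting `K`, such that `K ∩ S` and `K ∩ T` are distinct singletons. -/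
theorem exists_opposite_supporting_halfspaces_singleton_inters
    (n : ℕ) (K : Set (EuclideanSpace ℝ (Fin n)))
    (hc : IsCompact K) (hcv : Convex ℝ K)
    (hpts : ∃ a ∈ K, ∃ b ∈ K, a ≠ b)
    (f : EuclideanSpace ℝ (Fin n)) (hf : ‖f‖ = 1) (ε : ℝ) (hε : 0 < ε) :
    ∃ (g : EuclideanSpace ℝ (Fin n)) (α β : ℝ), ‖g‖ = 1 ∧ ‖f - g‖ ≤ ε ∧ β ≤ α ∧
      (∀ y ∈ K, β ≤ ⟪g, y⟫ ∧ ⟪g, y⟫ ≤ α) ∧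
      ∃ u v : EuclideanSpace ℝ (Fin n), u ≠ v ∧
        K ∩ {y | α ≤ ⟪g, y⟫} = {u} ∧ K ∩ {y | ⟪g, y⟫ ≤ β} = {v} :=
  exists_opposite_supporting_halfspaces_singleton_inters_general n K hc hpts f hf ε hε
end

section
/- Let K₁ and K₂ be nonempty closed convex sets in ℝⁿ and let m be an integer with 1 ≤ m ≤ n − 1. Suppose K₁ is unbounded and for every m-dimensional linear subspace L of ℝⁿ the orthogonal projections π_L(K₁) and π_L(K₂) are homothetic. Then K₂ is unbounded. -/
open Bornology Module Submodule

section DivisionRing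

variable {K V : Type*} [DivisionRing K] [AddCommGroup V] [Module K V] [Module.Finite K V]

theorem Submodule.exists_le_finrank_eq_s14 (N : Submodule K V) {k : ℕ} (hNk : finrank K N ≤ k)
    (hk : k ≤ finrank K V) : ∃ W : Submodule K V, N ≤ W ∧ finrank K W = k := by
  induction k, hNk using Nat.le_induction with
  | base => exact ⟨N, le_rfl, rfl⟩
  | succ k _ ih =>
    obtain ⟨W, hNW, rfl⟩ := ih (by omega)
    obtain ⟨x, -, hx⟩ := SetLike.exists_of_lt (lt_top_of_finrank_lt_finrank (s := W) (by omega))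
    exact ⟨W ⊔ span K {x}, hNW.trans le_sup_left, finrank_sup_span_singleton hx⟩

theorem exists_mem_submodule_finrank_eq (v : V) {k : ℕ} (hk₁ : 1 ≤ k) (hk : k ≤ finrank K V) :
    ∃ W : Submodule K V, v ∈ W ∧ finrank K W = k := by
  obtain ⟨W, hvW, hW⟩ := (span K {v}).exists_le_finrank_eq_s14
    ((finrank_span_le_card {v}).trans (by simpa using hk₁)) hk
  exact ⟨W, hvW (mem_span_singleton_self v), hW⟩

end DivisionRing

theorem Homothetic.isBounded {n : ℕ} {X₁ X₂ : Set (EuclideanSpace ℝ (Fin n))}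
    (h : Homothetic X₁ X₂) (hX₂ : IsBounded X₂) : IsBounded X₁ := by
  obtain ⟨z, l, -, rfl⟩ := h
  exact ((isometry_add_left z).lipschitz.comp (lipschitzWith_smul l)).isBounded_image hX₂

section InnerProductSpace

variable {𝕜 E : Type*} [RCLike 𝕜] [NormedAddCommGroup E] [InnerProductSpace 𝕜 E]
  [FiniteDimensional 𝕜 E]

theorem isBounded_of_forall_isBounded_image_inner {S : Set E}
    (h : ∀ v : E, IsBounded ((fun x => inner 𝕜 v x) '' S)) : IsBounded S := by
  let b := stdOrthonormalBasis 𝕜 E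
  choose C hC using fun i => isBounded_iff_forall_norm_le.mp (h (b i))
  refine isBounded_iff_forall_norm_le.mpr ⟨∑ i, C i, fun x hx => ?_⟩
  calc ‖x‖ = ‖∑ i, inner 𝕜 (b i) x • b i‖ := by rw [b.sum_repr']
    _ ≤ ∑ i, ‖inner 𝕜 (b i) x‖ := by
      refine (norm_sum_le _ _).trans (Finset.sum_le_sum fun i _ => ?_)
      rw [norm_smul, b.orthonormal.1 i, mul_one]
    _ ≤ ∑ i, C i := Finset.sum_le_sum fun i _ => hC i _ (Set.mem_image_of_mem _ hx)

theorem isBounded_of_forall_exists_mem_isBounded_starProjection {S : Set E}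
    (h : ∀ v : E, ∃ L : Submodule 𝕜 E, v ∈ L ∧ IsBounded (L.starProjection '' S)) :
    IsBounded S := by
  refine isBounded_of_forall_isBounded_image_inner (𝕜 := 𝕜) fun v => ?_
  obtain ⟨L, hvL, hL⟩ := h v
  have hS : (fun x => inner 𝕜 v x) '' S = (fun x => inner 𝕜 v x) '' (L.starProjection '' S) := by
    rw [Set.image_image]
    refine Set.image_congr fun x _ => ?_
    rw [← starProjection_eq_self_iff.mpr hvL, inner_starProjection_left_eq_right,
      starProjection_eq_self_iff.mpr hvL]
  rw [hS]
  exact (innerSL 𝕜 v).lipschitz.isBounded_image hL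

end InnerProductSpace

theorem unbounded_of_projections_homothetic_of_unbounded_general
    (n m : ℕ) (hm₁ : 1 ≤ m) (hm₂ : m ≤ n - 1)
    (K₁ K₂ : Set (EuclideanSpace ℝ (Fin n)))
    (hub : ¬ Bornology.IsBounded K₁)
    (hproj : ∀ L : Submodule ℝ (EuclideanSpace ℝ (Fin n)),
      Module.finrank ℝ L = m →
      Homothetic ((fun x => (Submodule.orthogonalProjection L x : EuclideanSpace ℝ (Fin n))) '' K₁)
        ((fun x => (Submodule.orthogonalProjection L x : EuclideanSpace ℝ (Fin n))) '' K₂)) :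
    ¬ Bornology.IsBounded K₂ := by
  intro hK₂
  refine hub (isBounded_of_forall_exists_mem_isBounded_starProjection (𝕜 := ℝ) fun v => ?_)
  obtain ⟨L, hvL, hL⟩ := exists_mem_submodule_finrank_eq v hm₁
    (by rw [finrank_euclideanSpace_fin]; omega)
  exact ⟨L, hvL, (hproj L hL).isBounded (L.starProjection.lipschitz.isBounded_image hK₂)⟩

/-- If the nonempty closed convex sets `K₁, K₂ ⊆ ℝⁿ` have homothetic orthogonal
projections on every `m`-dimensional linear subspace of `ℝⁿ` (`1 ≤ m ≤ n - 1`) and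
`K₁` is unbounded, then `K₂` is unbounded as well. -/
theorem unbounded_of_projections_homothetic_of_unbounded
    (n m : ℕ) (hm₁ : 1 ≤ m) (hm₂ : m ≤ n - 1)
    (K₁ K₂ : Set (EuclideanSpace ℝ (Fin n)))
    (hne₁ : K₁.Nonempty) (hne₂ : K₂.Nonempty)
    (hcl₁ : IsClosed K₁) (hcl₂ : IsClosed K₂)
    (hcv₁ : Convex ℝ K₁) (hcv₂ : Convex ℝ K₂)
    (hub : ¬ Bornology.IsBounded K₁)
    (hproj : ∀ L : Submodule ℝ (EuclideanSpace ℝ (Fin n)),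
      Module.finrank ℝ L = m →
      Homothetic ((fun x => (Submodule.orthogonalProjection L x : EuclideanSpace ℝ (Fin n))) '' K₁)
        ((fun x => (Submodule.orthogonalProjection L x : EuclideanSpace ℝ (Fin n))) '' K₂)) :
    ¬ Bornology.IsBounded K₂ :=
  unbounded_of_projections_homothetic_of_unbounded_general n m hm₁ hm₂ K₁ K₂ hub hproj
end
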